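/- arXiv:1901.04440 — 5 statements merged into one kernel-verified Lean document; each statement's English description precedes it below -/
import Mathlib

section
/- (Finite Ramsey Theorem) For all natural numbers k, n, m there exists a natural number l such that l → (m)_k^n: for every partition f : [l]^n → k there is a set H ⊆ {0,…,l−1} with card(H) ≥ m that is homogeneous for f. -/
open Set Filter

/-- Infinite Ramsey theorem. -/
theorem ramsey_inf (n : ℕ) : ∀ {k : ℕ} (f : Finset ℕ → Fin (k + 1)) (S : Set ℕ),
    S.Infinite → ∃ H ⊆ S, H.Infinite ∧
      ∀ s t : Finset ℕ, ↑s ⊆ H → ↑t ⊆ H → s.card = n → t.card = n → f s = f t := by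
  induction n with
  | zero =>
    intro k f S hS
    refine ⟨S, le_refl _, hS, fun s t _ _ hs ht => ?_⟩
    rw [Finset.card_eq_zero] at hs ht
    rw [hs, ht]
  | succ n IH =>
    intro k f S hS
    -- one step of the construction
    have key : ∀ (T : Set ℕ), T.Infinite → ∃ (a : ℕ) (T' : Set ℕ), T'.Infinite ∧ T' ⊆ T ∧
        a ∈ T ∧ (∀ x ∈ T', a < x) ∧
        ∀ s t : Finset ℕ, ↑s ⊆ T' → ↑t ⊆ T' → s.card = n → t.card = n →
          f (insert a s) = f (insert a t) := by
      intro T hT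
      obtain ⟨a, ha⟩ := hT.nonempty
      have hT0 : (T \ Set.Iic a).Infinite := hT.diff (Set.finite_Iic a)
      obtain ⟨H', hH'sub, hH'inf, hH'hom⟩ := IH (fun s => f (insert a s)) _ hT0
      refine ⟨a, H', hH'inf, fun x hx => (hH'sub hx).1, ha,
        fun x hx => not_le.1 (hH'sub hx).2, hH'hom⟩
    choose stepA stepT hinf hsub hmem hlt hhom using key
    -- iterate
    let F : ℕ → {T : Set ℕ // T.Infinite} := fun i =>
      Nat.rec ⟨S, hS⟩ (fun _ p => ⟨stepT p.1 p.2, hinf p.1 p.2⟩) i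
    let a : ℕ → ℕ := fun i => stepA (F i).1 (F i).2
    have hFsucc : ∀ i, (F (i + 1)).1 = stepT (F i).1 (F i).2 := fun i => rfl
    have hmono : ∀ i j, i ≤ j → (F j).1 ⊆ (F i).1 := by
      intro i j hij
      induction j, hij using Nat.le_induction with
      | base => exact le_refl _
      | succ j hij ih => exact subset_trans (by rw [hFsucc]; exact hsub _ _) ih
    have haF : ∀ i, a i ∈ (F i).1 := fun i => hmem _ _
    have haS : ∀ i, a i ∈ S := fun i => hmono 0 i (Nat.zero_le i) (haF i)
    have halt : ∀ i x, x ∈ (F (i + 1)).1 → a i < x := by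
      intro i x hx; rw [hFsucc] at hx; exact hlt _ _ _ hx
    have haj : ∀ i j, i < j → a j ∈ (F (i + 1)).1 := fun i j hij =>
      hmono (i + 1) j hij (haF j)
    have hamono : StrictMono a := fun i j hij => halt i _ (haj i j hij)
    -- colors
    have hselx : ∀ i, ∃ s : Finset ℕ, ↑s ⊆ (F (i + 1)).1 ∧ s.card = n := fun i =>
      (F (i + 1)).2.exists_subset_card_eq n
    choose sel hsel1 hsel2 using hselx
    let c : ℕ → Fin (k + 1) := fun i => f (insert (a i) (sel i))
    -- key homogeneity: any (n+1)-subset of the `a`s with min index i has color c i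
    have hcolor : ∀ (i : ℕ) (s : Finset ℕ), a i ∈ s → (∀ x ∈ s, x ≠ a i → x ∈ (F (i + 1)).1) →
        s.card = n + 1 → f s = c i := by
      intro i s hais hs hcard
      have hins : s = insert (a i) (s.erase (a i)) := (Finset.insert_erase hais).symm
      have hsub' : ↑(s.erase (a i)) ⊆ (F (i + 1)).1 := by
        intro x hx
        rcases Finset.mem_erase.1 hx with ⟨hne, hxs⟩
        exact hs x hxs hne
      have hcard' : (s.erase (a i)).card = n := by
        rw [Finset.card_erase_of_mem hais, hcard]; omega
      have := hhom (F i).1 (F i).2 (s.erase (a i)) (sel i)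
        (by rw [← hFsucc]; exact hsub') (by rw [← hFsucc]; exact hsel1 i) hcard' (hsel2 i)
      rw [hins]
      exact this
    -- pigeonhole
    obtain ⟨c₀, hc₀⟩ := Finite.exists_infinite_fiber c
    have hI : (c ⁻¹' {c₀}).Infinite := Set.infinite_coe_iff.1 hc₀
    refine ⟨a '' (c ⁻¹' {c₀}), ?_, hI.image (hamono.injective.injOn), ?_⟩
    · rintro x ⟨i, _, rfl⟩; exact haS i
    · have main : ∀ s : Finset ℕ, ↑s ⊆ a '' (c ⁻¹' {c₀}) → s.card = n + 1 → f s = c₀ := by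
        intro s hsH hcard
        have hne : s.Nonempty := Finset.card_pos.1 (by omega)
        obtain ⟨i, hi, hmin⟩ := hsH (s.min'_mem hne)
        have : f s = c i := by
          refine hcolor i s (hmin ▸ s.min'_mem hne) ?_ hcard
          intro x hxs hxne
          obtain ⟨j, _, rfl⟩ := hsH hxs
          have hij : i < j := by
            have h1 : a i ≤ a j := hmin ▸ s.min'_le _ hxs
            have : a i ≠ a j := fun h => hxne h.symm
            exact hamono.lt_iff_lt.1 (lt_of_le_of_ne h1 this)
          exact haj i j hij
        rw [this]; exact hi
      intro s t hsH htH hs ht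
      rw [main s hsH hs, main t htH ht]


/-- `[M]^e` with the ambient set `{0, …, M-1}`: the `e`-element subsets of
`{0, …, M-1}`. -/
def ESubsets (M e : ℕ) : Type :=
  {s : Finset ℕ // s ⊆ Finset.range M ∧ s.card = e}

/-- `H` is homogeneous for a partition `P` of `[M]^e`: `P` is constant on the
`e`-element subsets of `H`. -/
def Homog {M e : ℕ} {α : Type*} (P : ESubsets M e → α) (H : Finset ℕ) : Prop :=
  ∀ s t : ESubsets M e, s.1 ⊆ H → t.1 ⊆ H → P s = P t

/-- **Finite Ramsey Theorem.** For all `k, n, m` there is `l` with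
`l → (m)ₖⁿ`: every partition `f : [l]^n → k` has a homogeneous set
`H ⊆ {0, …, l-1}` of cardinality at least `m`. -/
theorem finite_ramsey (k n m : ℕ) :
    ∃ l : ℕ, ∀ f : ESubsets l n → Fin k,
      ∃ H : Finset ℕ, H ⊆ Finset.range l ∧ m ≤ H.card ∧ Homog f H := by
  match k with
  | 0 =>
    exact ⟨n, fun f => (f ⟨Finset.range n, le_refl _, Finset.card_range n⟩).elim0⟩
  | k + 1 =>
    by_contra hcon
    push_neg at hcon
    choose f hf using hcon
    set U := hyperfilter ℕ with hU
    classical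
    let Fc : Finset ℕ → ℕ → Fin (k + 1) := fun s l =>
      if h : s ⊆ Finset.range l ∧ s.card = n then f l ⟨s, h⟩ else 0
    have hg : ∀ s : Finset ℕ, ∃ c, {l | Fc s l = c} ∈ U := by
      intro s
      have h1 : (⋃ c ∈ (Set.univ : Set (Fin (k + 1))), {l | Fc s l = c}) ∈ U := by
        have : (⋃ c ∈ (Set.univ : Set (Fin (k + 1))), {l | Fc s l = c}) = Set.univ := by
          ext l; simp
        rw [this]; exact Filter.univ_mem
      obtain ⟨c, -, hc⟩ := (Ultrafilter.finite_biUnion_mem_iff Set.finite_univ).1 h1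
      exact ⟨c, hc⟩
    choose g hgspec using hg
    obtain ⟨H, hHsub, hHinf, hHhom⟩ := ramsey_inf n g Set.univ Set.infinite_univ
    obtain ⟨H', hH'sub, hH'card⟩ := hHinf.exists_subset_card_eq m
    have hA : {l | ∀ s ∈ H'.powersetCard n, Fc s l = g s} ∈ U :=
      (Filter.eventually_all_finset (H'.powersetCard n)
        (p := fun s l => Fc s l = g s)).2 (fun s _ => hgspec s)
    have hB : {l | ∀ x ∈ H', x < l} ∈ U := by
      apply Nat.hyperfilter_le_atTop
      filter_upwards [Filter.Ioi_mem_atTop (H'.sup id)] with l hl x hx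
      exact lt_of_le_of_lt (Finset.le_sup (f := id) hx) hl
    obtain ⟨l, hlA, hlB⟩ := Filter.nonempty_of_mem (Filter.inter_mem hA hB)
    have hH'range : H' ⊆ Finset.range l := fun x hx => Finset.mem_range.2 (hlB x hx)
    refine hf l H' hH'range hH'card.ge ?_
    intro s t hs ht
    have key : ∀ (u : ESubsets l n), u.1 ⊆ H' → f l u = g u.1 := by
      intro u hu
      have hmem : u.1 ∈ H'.powersetCard n := Finset.mem_powersetCard.2 ⟨hu, u.2.2⟩
      have heq : Fc u.1 l = f l u := by
        show (if h : u.1 ⊆ Finset.range l ∧ u.1.card = n then f l ⟨u.1, h⟩ else 0) = f l u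
        rw [dif_pos u.2]
        rfl
      rw [← heq]
      exact hlA u.1 hmem
    rw [key s hs, key t ht]
    exact hHhom s.1 t.1 (subset_trans (Finset.coe_subset.2 hs) hH'sub)
      (subset_trans (Finset.coe_subset.2 ht) hH'sub) s.2.2 t.2.2
end

section
/- (Paris–Harrington Principle) For all natural numbers n, r, k there exists a natural number m such that m →* (k)_r^n: for every partition P : [m]^n → r there is a set H ⊆ {0,…,m−1} that is relatively large, homogeneous for P, and of cardinality at least k. -/
lemma ramseyInf (r : ℕ) : ∀ (n : ℕ) (c : Finset ℕ → Fin (r+1)) (A : Set ℕ), A.Infinite →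
    ∃ S : Set ℕ, S ⊆ A ∧ S.Infinite ∧
      ∀ s t : Finset ℕ, s.card = n → t.card = n → ↑s ⊆ S → ↑t ⊆ S → c s = c t := by
  intro n
  induction n with
  | zero =>
    intro c A hA
    refine ⟨A, subset_rfl, hA, fun s t hs ht _ _ => ?_⟩
    rw [Finset.card_eq_zero.mp hs, Finset.card_eq_zero.mp ht]
  | succ n IH =>
    intro c A hA
    have key : ∀ B : Set ℕ, B.Infinite → ∃ S' : Set ℕ,
        S' ⊆ B ∩ Set.Ioi (sInf B) ∧ S'.Infinite ∧
        ∀ s t : Finset ℕ, s.card = n → t.card = n → ↑s ⊆ S' → ↑t ⊆ S' →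
          c (insert (sInf B) s) = c (insert (sInf B) t) := by
      intro B hB
      have hinf : (B ∩ Set.Ioi (sInf B)).Infinite := by
        have : B ∩ Set.Ioi (sInf B) = B \ Set.Iic (sInf B) := by
          ext x; simp [Set.mem_diff, Set.mem_Ioi, Set.mem_Iic, not_le, and_comm]
        rw [this]
        exact hB.diff (Set.finite_Iic _)
      obtain ⟨S', h1, h2, h3⟩ := IH (fun s => c (insert (sInf B) s)) _ hinf
      exact ⟨S', h1, h2, h3⟩
    choose F hF1 hF2 hF3 using key
    let seq : ℕ → {B : Set ℕ // B.Infinite} := fun i =>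
      Nat.rec ⟨A, hA⟩ (fun _ p => ⟨F p.1 p.2, hF2 p.1 p.2⟩) i
    set a : ℕ → ℕ := fun i => sInf (seq i).1 with ha_def
    have hseq : ∀ i, (seq (i+1)).1 = F (seq i).1 (seq i).2 := fun i => rfl
    have h1 : ∀ i, (seq (i+1)).1 ⊆ (seq i).1 ∩ Set.Ioi (a i) := fun i => hF1 _ _
    have ha_mem : ∀ i, a i ∈ (seq i).1 := fun i => Nat.sInf_mem (seq i).2.nonempty
    have hanti : Antitone (fun i => (seq i).1) :=
      antitone_nat_of_succ_le fun i => (h1 i).trans Set.inter_subset_left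
    have hlt : ∀ i, a i < a (i+1) := fun i => ((h1 i) (ha_mem (i+1))).2
    have hmono : StrictMono a := strictMono_nat_of_lt_succ hlt
    have haj : ∀ i j, i < j → a j ∈ (seq (i+1)).1 := fun i j h => hanti h (ha_mem j)
    -- canonical witness
    have hwit : ∀ i, ∃ w : Finset ℕ, w.card = n ∧ ↑w ⊆ (seq (i+1)).1 := by
      intro i
      obtain ⟨w, hw1, hw2⟩ := (seq (i+1)).2.exists_subset_card_eq n
      exact ⟨w, hw2, hw1⟩
    choose w hw1 hw2 using hwit
    set d : ℕ → Fin (r+1) := fun i => c (insert (a i) (w i)) with hd_def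
    have key2 : ∀ (i : ℕ) (s : Finset ℕ), s.card = n → ↑s ⊆ (seq (i+1)).1 →
        c (insert (a i) s) = d i := by
      intro i s hs hsub
      exact hF3 (seq i).1 (seq i).2 s (w i) hs (hw1 i) hsub (hw2 i)
    obtain ⟨v, hv⟩ := Finite.exists_infinite_fiber d
    rw [Set.infinite_coe_iff] at hv
    refine ⟨a '' (d ⁻¹' {v}), ?_, hv.image (hmono.injective.injOn), ?_⟩
    · rintro x ⟨i, _, rfl⟩
      exact hanti (Nat.zero_le i) (ha_mem i)
    · have claim : ∀ s : Finset ℕ, s.card = n+1 → ↑s ⊆ a '' (d ⁻¹' {v}) → c s = v := by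
        intro s hcard hsS
        have hne : s.Nonempty := Finset.card_pos.mp (by omega)
        have hx : s.min' hne ∈ s := s.min'_mem hne
        obtain ⟨i, hiI, hix⟩ := hsS hx
        have herase : (s.erase (s.min' hne)).card = n := by
          rw [Finset.card_erase_of_mem hx, hcard]
          omega
        have hsub' : ↑(s.erase (s.min' hne)) ⊆ (seq (i+1)).1 := by
          intro y hy
          have hy' := Finset.mem_of_mem_erase hy
          obtain ⟨j, hjI, rfl⟩ := hsS hy'
          have hy2 : a j ∈ s.erase (s.min' hne) := hy
          have : a i < a j := by
            rcases lt_or_eq_of_le (s.min'_le _ hy') with h | h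
            · omega
            · exact absurd h.symm (Finset.ne_of_mem_erase hy2)
          exact haj i j (hmono.lt_iff_lt.mp this)
        have := key2 i _ herase hsub'
        rw [hix] at this
        rw [Finset.insert_erase hx] at this
        rw [this]
        exact hiI
      intro s t hs ht hsS htS
      rw [claim s hs hsS, claim t ht htS]

/-- **Paris–Harrington Principle.** For all `n, r, k` there is `m` with
`m →* (k)ᵣⁿ`: every partition `P : [m]^n → r` has a homogeneous set
`H ⊆ {0, …, m-1}` that is relatively large (`min H ≤ card H`) and of
cardinality at least `k`. -/
theorem paris_harrington (n r k : ℕ) :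
    ∃ m : ℕ, ∀ P : ESubsets m n → Fin r,
      ∃ H : Finset ℕ, H ⊆ Finset.range m ∧ Homog P H ∧ k ≤ H.card ∧
        ∃ hne : H.Nonempty, H.min' hne ≤ H.card := by
  rcases r with _ | r
  · exact ⟨n, fun P => (P ⟨Finset.range n, subset_rfl, Finset.card_range n⟩).elim0⟩
  by_contra hcon
  push_neg at hcon
  choose P hP using hcon
  set Q : ℕ → Finset ℕ → Fin (r+1) := fun m s =>
    if h : s ⊆ Finset.range m ∧ s.card = n then P m ⟨s, h⟩ else 0 with hQ_def
  set U : Ultrafilter ℕ := Ultrafilter.of Filter.cofinite with hU_def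
  have hUcof : (U : Filter ℕ) ≤ Filter.cofinite := Ultrafilter.of_le _
  have hc : ∀ s : Finset ℕ, ∃ v, {m | Q m s = v} ∈ U := by
    intro s
    by_contra hv
    push_neg at hv
    have hall : ∀ v : Fin (r+1), {m | Q m s = v}ᶜ ∈ U := fun v =>
      (Ultrafilter.compl_mem_iff_notMem).mpr (hv v)
    have : (⋂ v : Fin (r+1), {m | Q m s = v}ᶜ) ∈ U := Filter.iInter_mem.mpr hall
    obtain ⟨m, hm⟩ := U.nonempty_of_mem this
    exact (Set.mem_iInter.mp hm (Q m s)) rfl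
  choose cc hcc using hc
  obtain ⟨S, -, hSinf, hShom⟩ := ramseyInf r n cc Set.univ Set.infinite_univ
  set μ := sInf S with hμ_def
  have hμS : μ ∈ S := Nat.sInf_mem hSinf.nonempty
  -- build H
  obtain ⟨H₀, hH₀S, hH₀card⟩ := (hSinf.diff (Set.finite_singleton μ)).exists_subset_card_eq
    (max k μ)
  have hμH₀ : μ ∉ H₀ := fun h => (hH₀S h).2 rfl
  set H : Finset ℕ := insert μ H₀ with hH_def
  have hHS : ↑H ⊆ S := by
    intro x hx
    rcases Finset.mem_insert.mp hx with rfl | hx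
    · exact hμS
    · exact (hH₀S hx).1
  have hHcard : H.card = max k μ + 1 := by
    rw [hH_def, Finset.card_insert_of_notMem hμH₀, hH₀card]
  have hHne : H.Nonempty := ⟨μ, Finset.mem_insert_self _ _⟩
  set m₀ : ℕ := H.max' hHne + 1 with hm₀_def
  have hHr : H ⊆ Finset.range m₀ := by
    intro x hx
    rw [Finset.mem_range]
    exact Nat.lt_succ_of_le (H.le_max' x hx)
  -- pick a good m
  have hT1 : {m | m₀ ≤ m} ∈ U :=
    hUcof (by simpa using (Set.finite_Iio m₀).subset (fun x hx => by simpa using hx))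
  have hT2 : (⋂ s ∈ (Finset.range m₀).powersetCard n, {m | Q m s = cc s}) ∈ U :=
    (Filter.biInter_finset_mem _).mpr fun s _ => hcc s
  obtain ⟨m, hm1, hm2⟩ := U.nonempty_of_mem (Filter.inter_mem hT1 hT2)
  have hm2' : ∀ s : Finset ℕ, s ⊆ Finset.range m₀ → s.card = n → Q m s = cc s := by
    intro s h1 h2
    exact Set.mem_iInter₂.mp hm2 s (Finset.mem_powersetCard.mpr ⟨h1, h2⟩)
  have hA : H ⊆ Finset.range m := hHr.trans (Finset.range_subset_range.mpr hm1)
  have hB : Homog (P m) H := by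
    intro s t hsH htH
    have hsQ : P m s = Q m s.1 := by
      show P m s = dite _ _ _
      rw [dif_pos s.2]
      rfl
    have htQ : P m t = Q m t.1 := by
      show P m t = dite _ _ _
      rw [dif_pos t.2]
      rfl
    rw [hsQ, htQ, hm2' s.1 (hsH.trans hHr) s.2.2, hm2' t.1 (htH.trans hHr) t.2.2]
    exact hShom s.1 t.1 s.2.2 t.2.2 (fun x hx => hHS (hsH hx)) (fun x hx => hHS (htH hx))
  have hC : k ≤ H.card := by rw [hHcard]; omega
  have hD : H.min' hHne ≤ H.card := by
    rw [hHcard]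
    exact le_trans (H.min'_le μ (Finset.mem_insert_self _ _)) (by omega)
  exact absurd (hP m H hA hB hC hHne) (not_lt.mpr hD)
end

section
/- Let √r denote the least natural number s with s² ≥ r. Given a partition P : [M]^e → r, there is a partition P' : [M]^{e+1} → 1 + 2·√r such that for every H ⊆ {0,…,M−1} of cardinality greater than e + 1, H is homogeneous for P if and only if H is homogeneous for P'. -/
/-- `√r`: the least natural number `s` with `s² ≥ r`. -/
noncomputable def sqrtCeil (r : ℕ) : ℕ := sInf {s : ℕ | r ≤ s ^ 2}

namespace ReduceAux

variable {M e r : ℕ}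

/-- Delete an element from an `(e+1)`-subset. -/
def del (u : ESubsets M (e+1)) (x : ℕ) (hx : x ∈ u.1) : ESubsets M e :=
  ⟨u.1.erase x, (Finset.erase_subset _ _).trans u.2.1,
    by simp [Finset.card_erase_of_mem hx, u.2.2]⟩

lemma unonempty (u : ESubsets M (e+1)) : u.1.Nonempty :=
  Finset.card_pos.mp (by rw [u.2.2]; omega)

/-- Delete the maximal element. -/
noncomputable def mdel (u : ESubsets M (e+1)) : ESubsets M e :=
  del u (u.1.max' (unonempty u)) (u.1.max'_mem _)

/-- `P` is constant on the `e`-subsets of `u`. -/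
def Pconst (P : ESubsets M e → Fin r) (u : ESubsets M (e+1)) : Prop :=
  ∀ x (hx : x ∈ u.1) y (hy : y ∈ u.1), P (del u x hx) = P (del u y hy)

/-- The high digit (base `q`) of `P` is constant on the `e`-subsets of `u`. -/
def Aconst (q : ℕ) (P : ESubsets M e → Fin r) (u : ESubsets M (e+1)) : Prop :=
  ∀ x (hx : x ∈ u.1) y (hy : y ∈ u.1),
    (P (del u x hx)).val / q = (P (del u y hy)).val / q

open Classical in
/-- The derived partition of `(e+1)`-subsets. -/
noncomputable def P2 (q : ℕ) (hq : 0 < q) (hr : r ≤ q * q)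
    (P : ESubsets M e → Fin r) (u : ESubsets M (e+1)) : Fin (1 + 2 * q) :=
  if Pconst P u then ⟨0, by omega⟩
  else if Aconst q P u then
    ⟨1 + q + (P (mdel u)).val % q, by have := Nat.mod_lt (P (mdel u)).val hq; omega⟩
  else
    ⟨1 + (P (mdel u)).val / q, by
      have h1 : (P (mdel u)).val < q * q := lt_of_lt_of_le (P (mdel u)).isLt hr
      have := (Nat.div_lt_iff_lt_mul hq).mpr h1
      omega⟩

lemma P2_of_pconst {q : ℕ} {hq : 0 < q} {hr : r ≤ q * q} {P : ESubsets M e → Fin r}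
    {u : ESubsets M (e+1)} (h : Pconst P u) : (P2 q hq hr P u).val = 0 := by
  simp [P2, h]

lemma P2_of_aconst {q : ℕ} {hq : 0 < q} {hr : r ≤ q * q} {P : ESubsets M e → Fin r}
    {u : ESubsets M (e+1)} (h : ¬ Pconst P u) (h2 : Aconst q P u) :
    (P2 q hq hr P u).val = 1 + q + (P (mdel u)).val % q := by
  simp [P2, h, h2]

lemma P2_of_naconst {q : ℕ} {hq : 0 < q} {hr : r ≤ q * q} {P : ESubsets M e → Fin r}
    {u : ESubsets M (e+1)} (h : ¬ Pconst P u) (h2 : ¬ Aconst q P u) :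
    (P2 q hq hr P u).val = 1 + (P (mdel u)).val / q := by
  simp [P2, h, h2]

lemma P2_pos {q : ℕ} {hq : 0 < q} {hr : r ≤ q * q} {P : ESubsets M e → Fin r}
    {u : ESubsets M (e+1)} (h : ¬ Pconst P u) : 0 < (P2 q hq hr P u).val := by
  by_cases h2 : Aconst q P u
  · rw [P2_of_aconst h h2]
    generalize (P (mdel u)).val % q = b
    omega
  · rw [P2_of_naconst h h2]
    generalize (P (mdel u)).val / q = a
    omega

lemma adiv_lt {q : ℕ} (hq : 0 < q) (hr : r ≤ q * q) {P : ESubsets M e → Fin r}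
    (s : ESubsets M e) : (P s).val / q < q :=
  (Nat.div_lt_iff_lt_mul hq).mpr (lt_of_lt_of_le (P s).isLt hr)

lemma mdel_erase {F : Finset ℕ} (hFne : F.Nonempty) {x : ℕ}
    (hx : x ∈ F.erase (F.max' hFne))
    (h1 : F.erase x ⊆ Finset.range M) (h2 : (F.erase x).card = e + 1)
    (h3 : F.erase (F.max' hFne) ⊆ Finset.range M)
    (h4 : (F.erase (F.max' hFne)).card = e + 1) :
    mdel (⟨F.erase x, h1, h2⟩ : ESubsets M (e+1)) =
      del (⟨F.erase (F.max' hFne), h3, h4⟩ : ESubsets M (e+1)) x hx := by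
  have hxm : x ≠ F.max' hFne := (Finset.mem_erase.mp hx).1
  have hmx : F.max' hFne ∈ F.erase x :=
    Finset.mem_erase.mpr ⟨hxm.symm, F.max'_mem hFne⟩
  have hne' : (F.erase x).Nonempty := ⟨_, hmx⟩
  have hmax : (F.erase x).max' hne' = F.max' hFne := by
    apply le_antisymm
    · exact Finset.max'_le _ _ _ (fun y hy => F.le_max' y (Finset.mem_of_mem_erase hy))
    · exact Finset.le_max' _ _ hmx
  apply Subtype.ext
  show (F.erase x).erase ((F.erase x).max' _) = (F.erase (F.max' hFne)).erase x
  rw [hmax, Finset.erase_right_comm]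

/-- Swap-connectivity: if `P` is constant on the `e`-subsets of every
`(e+1)`-subset of `H`, then `P` is constant on all `e`-subsets of `H`. -/
lemma homog_of_pconst {H : Finset ℕ} (hHM : H ⊆ Finset.range M)
    {P : ESubsets M e → Fin r}
    (hP : ∀ u : ESubsets M (e+1), u.1 ⊆ H → Pconst P u) : Homog P H := by
  have key : ∀ n (s t : ESubsets M e), s.1 ⊆ H → t.1 ⊆ H →
      (s.1 \ t.1).card ≤ n → P s = P t := by
    intro n
    induction n with
    | zero =>
      intro s t hs ht hc
      have h0 : s.1 \ t.1 = ∅ := Finset.card_eq_zero.mp (Nat.le_zero.mp hc)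
      have hsub : s.1 ⊆ t.1 := by
        intro z hz
        by_contra hzt
        exact (Finset.notMem_empty z) (h0 ▸ Finset.mem_sdiff.mpr ⟨hz, hzt⟩)
      have : s.1 = t.1 := Finset.eq_of_subset_of_card_le hsub (by rw [s.2.2, t.2.2])
      congr 1
      exact Subtype.ext this
    | succ n ih =>
      intro s t hs ht hc
      rcases Nat.eq_zero_or_pos (s.1 \ t.1).card with h0 | hpos
      · exact ih s t hs ht (by omega)
      obtain ⟨x, hx⟩ := Finset.card_pos.mp hpos
      have hxs : x ∈ s.1 := (Finset.mem_sdiff.mp hx).1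
      have hxt : x ∉ t.1 := (Finset.mem_sdiff.mp hx).2
      have hts : (t.1 \ s.1).Nonempty := by
        rw [← Finset.card_pos, Finset.card_sdiff_comm (by rw [s.2.2, t.2.2])]
        exact hpos
      obtain ⟨y, hy⟩ := hts
      have hyt : y ∈ t.1 := (Finset.mem_sdiff.mp hy).1
      have hys : y ∉ s.1 := (Finset.mem_sdiff.mp hy).2
      have hxy : x ≠ y := fun h => hys (h ▸ hxs)
      have he1 : 1 ≤ e := by
        have h := Finset.card_pos.mpr ⟨x, hxs⟩
        rw [s.2.2] at h; omega
      have hyH : y ∈ H := ht hyt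
      have hys' : y ∉ s.1.erase x := fun h => hys (Finset.mem_of_mem_erase h)
      have hcs' : (insert y (s.1.erase x)).card = e := by
        rw [Finset.card_insert_of_notMem hys', Finset.card_erase_of_mem hxs, s.2.2]
        omega
      have hs'H : insert y (s.1.erase x) ⊆ H := by
        intro z hz
        rcases Finset.mem_insert.mp hz with rfl | hz
        · exact hyH
        · exact hs (Finset.mem_of_mem_erase hz)
      have hxs' : x ∉ insert y (s.1.erase x) := by
        simp [Finset.mem_insert, hxy]
      set s'e : ESubsets M e := ⟨insert y (s.1.erase x), hs'H.trans hHM, hcs'⟩ with hs'e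
      have hu1 : insert x (insert y (s.1.erase x)) = insert y s.1 := by
        rw [Finset.insert_comm, Finset.insert_erase hxs]
      have huH : insert x (insert y (s.1.erase x)) ⊆ H :=
        Finset.insert_subset (hs hxs) hs'H
      have hucard : (insert x (insert y (s.1.erase x))).card = e + 1 := by
        rw [Finset.card_insert_of_notMem hxs', hcs']
      set u : ESubsets M (e+1) := ⟨insert x (insert y (s.1.erase x)), huH.trans hHM, hucard⟩
        with hu
      have hyu : y ∈ u.1 := Finset.mem_insert_of_mem (Finset.mem_insert_self _ _)
      have hxu : x ∈ u.1 := Finset.mem_insert_self _ _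
      have h1 : del u y hyu = s := by
        apply Subtype.ext
        show u.1.erase y = s.1
        rw [show u.1 = insert y s.1 from hu1, Finset.erase_insert hys]
      have h2 : del u x hxu = s'e := by
        apply Subtype.ext
        show u.1.erase x = insert y (s.1.erase x)
        exact Finset.erase_insert hxs'
      have hstep : P s = P s'e := by
        rw [← h1, ← h2]
        exact hP u huH y hyu x hxu
      have hsub2 : s'e.1 \ t.1 ⊆ (s.1 \ t.1).erase x := by
        intro z hz
        have hz1 := Finset.mem_sdiff.mp hz
        rcases Finset.mem_insert.mp hz1.1 with rfl | hz2
        · exact absurd hyt hz1.2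
        · exact Finset.mem_erase.mpr ⟨(Finset.mem_erase.mp hz2).1,
            Finset.mem_sdiff.mpr ⟨Finset.mem_of_mem_erase hz2, hz1.2⟩⟩
      have hcard2 : (s'e.1 \ t.1).card ≤ n := by
        have := Finset.card_le_card hsub2
        rw [Finset.card_erase_of_mem hx] at this
        omega
      rw [hstep]
      exact ih s'e t hs'H ht hcard2
  intro s t hs ht
  exact key (s.1 \ t.1).card s t hs ht le_rfl

/-- Key lemma: if `H` (of size at least `e+2`) is homogeneous for `P2`, then
`P` is constant on the `e`-subsets of every `(e+1)`-subset of `H`. -/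
lemma pconst_of_homogP2 {q : ℕ} (hq : 0 < q) (hr : r ≤ q * q)
    {P : ESubsets M e → Fin r} {H : Finset ℕ} (hHM : H ⊆ Finset.range M)
    (hHc : e + 1 < H.card) (hH : Homog (P2 q hq hr P) H) :
    ∀ u : ESubsets M (e+1), u.1 ⊆ H → Pconst P u := by
  obtain ⟨F, hFH, hFc⟩ := Finset.exists_subset_card_eq (s := H) (n := e+2) (by omega)
  have hFne : F.Nonempty := Finset.card_pos.mp (by omega)
  set m := F.max' hFne with hm
  have hmF : m ∈ F := F.max'_mem hFne
  have humH : F.erase m ⊆ H := (Finset.erase_subset _ _).trans hFH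
  have humc : (F.erase m).card = e + 1 := by
    rw [Finset.card_erase_of_mem hmF, hFc]
    omega
  set um : ESubsets M (e+1) := ⟨F.erase m, humH.trans hHM, humc⟩ with humdef
  -- For each x in um, the set F.erase x as an (e+1)-subset
  have key : ∀ x (hxu : x ∈ um.1),
      ∃ v : ESubsets M (e+1), v.1 ⊆ H ∧ mdel v = del um x hxu := by
    intro x hxu
    have hxF : x ∈ F := Finset.mem_of_mem_erase hxu
    have hvH : F.erase x ⊆ H := (Finset.erase_subset _ _).trans hFH
    have hvc : (F.erase x).card = e + 1 := by
      rw [Finset.card_erase_of_mem hxF, hFc]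
      omega
    refine ⟨⟨F.erase x, hvH.trans hHM, hvc⟩, hvH, ?_⟩
    exact mdel_erase hFne hxu (hvH.trans hHM) hvc (humH.trans hHM) humc
  -- first show Pconst um
  have hum : Pconst P um := by
    by_contra hnc
    by_cases hA : Aconst q P um
    · -- B is constant on subsets of um
      have hB : ∀ x (hxu : x ∈ um.1),
          (P (del um x hxu)).val % q = (P (mdel um)).val % q := by
        intro x hxu
        obtain ⟨v, hvH, hvmd⟩ := key x hxu
        have hPeq := congrArg Fin.val (hH v um hvH humH)
        have hnpv : ¬ Pconst P v := by
          intro hpv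
          rw [P2_of_pconst hpv, P2_of_aconst hnc hA] at hPeq
          generalize (P (mdel um)).val % q = bm at hPeq
          omega
        by_cases hAv : Aconst q P v
        · rw [P2_of_aconst hnpv hAv, P2_of_aconst hnc hA, hvmd] at hPeq
          generalize (P (del um x hxu)).val % q = b1 at hPeq ⊢
          generalize (P (mdel um)).val % q = b2 at hPeq ⊢
          omega
        · exfalso
          rw [P2_of_naconst hnpv hAv, P2_of_aconst hnc hA] at hPeq
          have h5 := adiv_lt hq hr (P := P) (mdel v)
          generalize (P (mdel v)).val / q = av at hPeq h5
          generalize (P (mdel um)).val % q = bm at hPeq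
          omega
      apply hnc
      intro x hx y hy
      have hax := hA x hx y hy
      have hbx := (hB x hx).trans (hB y hy).symm
      apply Fin.eq_of_val_eq
      have d1 := Nat.div_add_mod (P (del um x hx)).val q
      have d2 := Nat.div_add_mod (P (del um y hy)).val q
      rw [hax, hbx] at d1
      omega
    · -- A is constant on subsets of um : contradiction with hA
      apply hA
      have hAv : ∀ x (hxu : x ∈ um.1),
          (P (del um x hxu)).val / q = (P (mdel um)).val / q := by
        intro x hxu
        obtain ⟨v, hvH, hvmd⟩ := key x hxu
        have hPeq := congrArg Fin.val (hH v um hvH humH)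
        have hnpv : ¬ Pconst P v := by
          intro hpv
          rw [P2_of_pconst hpv, P2_of_naconst hnc hA] at hPeq
          generalize (P (mdel um)).val / q = am at hPeq
          omega
        by_cases hAv : Aconst q P v
        · exfalso
          rw [P2_of_aconst hnpv hAv, P2_of_naconst hnc hA] at hPeq
          have h5 := adiv_lt hq hr (P := P) (mdel um)
          generalize (P (mdel um)).val / q = am at hPeq h5
          generalize (P (mdel v)).val % q = bv at hPeq
          omega
        · rw [P2_of_naconst hnpv hAv, P2_of_naconst hnc hA, hvmd] at hPeq
          generalize (P (del um x hxu)).val / q = a1 at hPeq ⊢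
          generalize (P (mdel um)).val / q = a2 at hPeq ⊢
          omega
      intro x hx y hy
      rw [hAv x hx, hAv y hy]
  -- hence the common P2-value on H is 0, so every u is Pconst
  intro u hu
  by_contra hnc
  have hPeq := congrArg Fin.val (hH u um hu humH)
  rw [P2_of_pconst hum] at hPeq
  have := P2_pos (hq := hq) (hr := hr) hnc
  omega

lemma sqrtCeil_spec (r : ℕ) : r ≤ sqrtCeil r * sqrtCeil r := by
  have h : sqrtCeil r ∈ {s : ℕ | r ≤ s ^ 2} :=
    Nat.sInf_mem ⟨r, by simpa using Nat.le_self_pow (two_ne_zero) r⟩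
  simpa [pow_two] using h

end ReduceAux

open ReduceAux in
/-- **Reducing the number of classes by increasing the exponent.** Given a
partition `P : [M]^e → r`, there is a partition
`P' : [M]^{e+1} → 1 + 2·√r` such that every `H ⊆ {0, …, M-1}` of
cardinality greater than `e + 1` is homogeneous for `P` iff it is homogeneous
for `P'`. -/
theorem reduce_classes (M e r : ℕ) (P : ESubsets M e → Fin r) :
    ∃ P' : ESubsets M (e + 1) → Fin (1 + 2 * sqrtCeil r),
      ∀ H : Finset ℕ, H ⊆ Finset.range M → e + 1 < H.card →
        (Homog P H ↔ Homog P' H) := by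
  rcases Nat.eq_zero_or_pos r with rfl | hr0
  · refine ⟨fun u => (P (mdel u)).elim0, fun H hHM hHc => ?_⟩
    constructor
    · intro _ s t hs ht
      exact (P (mdel s)).elim0
    · intro _ s t hs ht
      exact (P s).elim0
  · have hq : 0 < sqrtCeil r := by
      rcases Nat.eq_zero_or_pos (sqrtCeil r) with h0 | h
      · exfalso
        have h2 := sqrtCeil_spec r
        rw [h0] at h2
        simp at h2
        omega
      · exact h
    have hr : r ≤ sqrtCeil r * sqrtCeil r := sqrtCeil_spec r
    refine ⟨P2 (sqrtCeil r) hq hr P, fun H hHM hHc => ?_⟩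
    constructor
    · -- Homog P H → Homog P2 H
      intro h s t hs ht
      have hcs : ∀ u : ESubsets M (e+1), u.1 ⊆ H → Pconst P u := by
        intro u hu x hx y hy
        exact h _ _ ((Finset.erase_subset _ _).trans hu)
          ((Finset.erase_subset _ _).trans hu)
      exact Fin.eq_of_val_eq (by rw [P2_of_pconst (hcs s hs), P2_of_pconst (hcs t ht)])
    · intro h
      exact homog_of_pconst hHM (pconst_of_homogP2 hq hr hHM hHc h)
end

section
/- For every natural number m there is a natural number r, depending only on m, such that for every M there is a partition R : [M]^2 → r with the property: if X ⊆ {0,…,M−1} is relatively large, homogeneous for R, and of cardinality greater than 2, then for all x, y ∈ X with x < y one has f_m(x) < y. -/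
/-- The Paris–Harrington hierarchy of fast-growing functions:
`f₀(x) = x + 2` and `f_{n+1}(x) = fₙ^{(x)}(2)`. -/
def phF : ℕ → ℕ → ℕ
  | 0, x => x + 2
  | n + 1, x => (phF n)^[x] 2

lemma phF_add_two : ∀ n x, x + 2 ≤ phF n x := by
  intro n
  induction n with
  | zero => intro x; simp [phF]
  | succ n ih =>
    intro x
    induction x with
    | zero => simp [phF]
    | succ x ihx =>
      have h1 : (phF n)^[x] 2 + 2 ≤ phF n ((phF n)^[x] 2) := ih _
      have h2 : x + 2 ≤ (phF n)^[x] 2 := ihx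
      show x + 1 + 2 ≤ (phF n)^[x + 1] 2
      rw [Function.iterate_succ_apply']
      omega

lemma phF_lt (n x : ℕ) : x < phF n x := by have := phF_add_two n x; omega

lemma phF_strictMono (n : ℕ) : StrictMono (phF n) := by
  induction n with
  | zero => intro a b h; simpa [phF] using h
  | succ n ih =>
    apply strictMono_nat_of_lt_succ
    intro x
    show (phF n)^[x] 2 < (phF n)^[x + 1] 2
    rw [Function.iterate_succ_apply']
    exact phF_lt n _

lemma phF_le_succ (n x : ℕ) : phF n x ≤ phF (n + 1) x := by
  cases x with
  | zero =>
    cases n with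
    | zero => simp [phF]
    | succ n => simp [phF]
  | succ x =>
    have h1 : x + 2 ≤ phF (n + 1) x := phF_add_two _ _
    have h2 : phF (n + 1) (x + 1) = phF n (phF (n + 1) x) := by
      show (phF n)^[x + 1] 2 = _
      rw [Function.iterate_succ_apply']
      rfl
    rw [h2]
    exact (phF_strictMono n).monotone (by omega)

lemma phF_mono_left {n m : ℕ} (h : n ≤ m) (x : ℕ) : phF n x ≤ phF m x := by
  induction m with
  | zero => simp_all
  | succ m ih =>
    rcases Nat.lt_or_ge n (m + 1) with h' | h'
    · exact le_trans (ih (by omega)) (phF_le_succ m x)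
    · have : n = m + 1 := by omega
      subst this; rfl

lemma iter_le_iter (n s : ℕ) {a b : ℕ} (h : a ≤ b) :
    (phF n)^[a] s ≤ (phF n)^[b] s := by
  induction b with
  | zero => simp_all
  | succ b ih =>
    rcases Nat.lt_or_ge a (b + 1) with h' | h'
    · have := ih (by omega)
      rw [Function.iterate_succ_apply']
      have := (phF_lt n ((phF n)^[b] s)).le
      omega
    · have : a = b + 1 := by omega
      subst this; rfl

lemma iter_strictMono (n j : ℕ) : StrictMono ((phF n)^[j]) := by
  induction j with
  | zero => simpa using strictMono_id
  | succ j ih =>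
    intro a b h
    rw [Function.iterate_succ_apply', Function.iterate_succ_apply']
    exact phF_strictMono n (ih h)

/-- The component colorings: `comp n x y` for a pair `x < y`. -/
def comp : ℕ → ℕ → ℕ → ℕ
  | 0, x, y => min (y - x) 3
  | n + 1, x, y =>
      min x (phF n 2 + 1) + (phF n 2 + 2) * (if phF (n + 1) x < y then 1 else 0)

lemma comp_lt {m n : ℕ} (h : n ≤ m) (x y : ℕ) : comp n x y < 2 * phF m 2 + 4 := by
  cases n with
  | zero => simp only [comp]; omega
  | succ n =>
    have hb : phF n 2 ≤ phF m 2 := phF_mono_left (by omega) 2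
    simp only [comp]
    split <;> omega

lemma exists_three (X : Finset ℕ) (h : 2 < X.card) :
    ∃ a ∈ X, ∃ b ∈ X, ∃ c ∈ X, a < b ∧ b < c := by
  obtain ⟨a, b, c, ha, hb, hc, hab, hac, hbc⟩ := Finset.two_lt_card_iff.mp h
  rcases Nat.lt_trichotomy a b with h1 | h1 | h1
  · rcases Nat.lt_trichotomy b c with h2 | h2 | h2
    · exact ⟨a, ha, b, hb, c, hc, h1, h2⟩
    · exact absurd h2 hbc
    · rcases Nat.lt_trichotomy a c with h3 | h3 | h3
      · exact ⟨a, ha, c, hc, b, hb, h3, h2⟩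
      · exact absurd h3 hac
      · exact ⟨c, hc, a, ha, b, hb, h3, h1⟩
  · exact absurd h1 hab
  · rcases Nat.lt_trichotomy a c with h2 | h2 | h2
    · exact ⟨b, hb, a, ha, c, hc, h1, h2⟩
    · exact absurd h2 hac
    · rcases Nat.lt_trichotomy b c with h3 | h3 | h3
      · exact ⟨b, hb, c, hc, a, ha, h3, h2⟩
      · exact absurd h3 hbc
      · exact ⟨c, hc, b, hb, a, ha, h3, h1⟩

/-- The main combinatorial lemma. -/
lemma main_growth :
    ∀ (m : ℕ) (X : Finset ℕ), 2 < X.card →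
      (∀ hne : X.Nonempty, X.min' hne ≤ X.card) →
      (∀ n, n ≤ m → ∀ x ∈ X, ∀ y ∈ X, ∀ x' ∈ X, ∀ y' ∈ X,
        x < y → x' < y' → comp n x y = comp n x' y') →
      ∀ x ∈ X, ∀ y ∈ X, x < y → phF m x < y := by
  intro m
  induction m with
  | zero =>
    intro X hX hlarge hom x hx y hy hxy
    obtain ⟨a, ha, b, hb, c, hc, hab, hbc⟩ := exists_three X hX
    have e1 := hom 0 le_rfl x hx y hy a ha b hb hxy hab
    have e2 := hom 0 le_rfl x hx y hy b hb c hc hxy hbc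
    have e3 := hom 0 le_rfl x hx y hy a ha c hc hxy (lt_trans hab hbc)
    simp only [comp] at e1 e2 e3
    show x + 2 < y
    omega
  | succ m ih =>
    intro X hX hlarge hom
    have hIH : ∀ x ∈ X, ∀ y ∈ X, x < y → phF m x < y :=
      ih X hX hlarge (fun n hn => hom n (le_trans hn (Nat.le_succ m)))
    by_contra hcon
    push_neg at hcon
    obtain ⟨x, hx, y, hy, hxy, hge⟩ := hcon
    -- every pair is "close"
    have hbit : ∀ u ∈ X, ∀ v ∈ X, u < v → v ≤ phF (m + 1) u := by
      intro u hu v hv huv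
      have e := hom (m + 1) le_rfl u hu v hv x hx y hy huv hxy
      simp only [comp] at e
      by_contra hc
      push_neg at hc
      rw [if_pos hc, if_neg (by omega)] at e
      simp only [mul_one, mul_zero, add_zero] at e
      omega
    have hne : X.Nonempty := Finset.card_pos.mp (by omega)
    set x0 := X.min' hne with hx0def
    have hx0m : x0 ∈ X := X.min'_mem hne
    obtain ⟨a, ha, b, hb, c, hc, hab, hbc⟩ := exists_three X hX
    have hx0b : x0 < b := lt_of_le_of_lt (X.min'_le a ha) hab
    -- the min component forces x0 to be large
    have hx0big : phF m 2 + 1 ≤ x0 := by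
      have e := hom (m + 1) le_rfl x0 hx0m c hc b hb c hc (lt_trans hx0b hbc) hbc
      simp only [comp] at e
      rw [if_neg (by have := hbit x0 hx0m c hc (lt_trans hx0b hbc); omega),
          if_neg (by have := hbit b hb c hc hbc; omega)] at e
      simp only [mul_zero, add_zero] at e
      omega
    -- order isomorphism with Fin X.card
    let iso := X.orderIsoOfFin (rfl : X.card = X.card)
    have hmem : ∀ i : Fin X.card, (iso i : ℕ) ∈ X := fun i => (iso i).2
    have hchain : ∀ j, ∀ hj : j < X.card, (phF m)^[j] x0 ≤ (iso ⟨j, hj⟩ : ℕ) := by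
      intro j
      induction j with
      | zero => intro hj; simpa using X.min'_le _ (hmem ⟨0, hj⟩)
      | succ j ihj =>
        intro hj
        have hj' : j < X.card := by omega
        have h1 : (iso ⟨j, hj'⟩ : ℕ) < (iso ⟨j + 1, hj⟩ : ℕ) := by
          have : (⟨j, hj'⟩ : Fin X.card) < ⟨j + 1, hj⟩ := by
            simp [Fin.lt_def]
          exact iso.strictMono this
        have h2 := hIH _ (hmem ⟨j, hj'⟩) _ (hmem ⟨j + 1, hj⟩) h1
        rw [Function.iterate_succ_apply']
        calc phF m ((phF m)^[j] x0) ≤ phF m (iso ⟨j, hj'⟩ : ℕ) :=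
              (phF_strictMono m).monotone (ihj hj')
          _ ≤ (iso ⟨j + 1, hj⟩ : ℕ) := h2.le
    have hklt : X.card - 1 < X.card := by omega
    set z := (iso ⟨X.card - 1, hklt⟩ : ℕ) with hzdef
    have hzmem : z ∈ X := hmem _
    have hzbig : (phF m)^[X.card - 1] x0 ≤ z := hchain _ hklt
    have hx0z : x0 < z := by
      have h0 : (phF m)^[0] x0 ≤ (iso ⟨0, by omega⟩ : ℕ) := hchain 0 (by omega)
      have : (iso ⟨0, by omega⟩ : ℕ) < z := by
        apply iso.strictMono
        simp [Fin.lt_def]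
        omega
      simp at h0
      omega
    have hzsmall : z ≤ phF (m + 1) x0 := hbit x0 hx0m z hzmem hx0z
    have hlargex0 : x0 ≤ X.card := hlarge hne
    -- derive the contradiction
    have h5 : 5 ≤ x0 := by have := phF_add_two m 2; omega
    have hA : (phF m)^[x0 - 1] x0 ≤ (phF m)^[X.card - 1] x0 :=
      iter_le_iter m x0 (by omega)
    have hB : phF (m + 1) x0 = (phF m)^[x0 - 1] (phF m 2) := by
      show (phF m)^[x0] 2 = _
      have : x0 = (x0 - 1) + 1 := by omega
      rw [this, Function.iterate_succ_apply]
      rfl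
    have hC : (phF m)^[x0 - 1] (phF m 2) < (phF m)^[x0 - 1] x0 :=
      iter_strictMono m (x0 - 1) (by omega)
    omega

lemma min'_pair {x y : ℕ} (h : x < y) (hne : ({x, y} : Finset ℕ).Nonempty) :
    ({x, y} : Finset ℕ).min' hne = x := by
  apply le_antisymm
  · exact Finset.min'_le _ x (by simp)
  · apply Finset.le_min'
    intro z hz
    simp only [Finset.mem_insert, Finset.mem_singleton] at hz
    rcases hz with rfl | rfl <;> omega

lemma max'_pair {x y : ℕ} (h : x < y) (hne : ({x, y} : Finset ℕ).Nonempty) :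
    ({x, y} : Finset ℕ).max' hne = y := by
  apply le_antisymm
  · apply Finset.max'_le
    intro z hz
    simp only [Finset.mem_insert, Finset.mem_singleton] at hz
    rcases hz with rfl | rfl <;> omega
  · exact Finset.le_max' _ y (by simp)

/-- **Large homogeneous sets grow fast.** For every `m` there is `r` (depending
only on `m`) such that for every `M` there is a partition `R : [M]^2 → r` with:
if `X ⊆ {0, …, M-1}` is relatively large, homogeneous for `R`, and of
cardinality greater than `2`, then `fₘ(x) < y` for all `x < y` in `X`. -/
theorem fast_growth_partition (m : ℕ) :
    ∃ r : ℕ, ∀ M : ℕ, ∃ R : ESubsets M 2 → Fin r,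
      ∀ X : Finset ℕ, X ⊆ Finset.range M →
        (∃ hne : X.Nonempty, X.min' hne ≤ X.card) → Homog R X → 2 < X.card →
          ∀ x ∈ X, ∀ y ∈ X, x < y → phF m x < y := by
  refine ⟨Fintype.card (Fin (m + 1) → Fin (2 * phF m 2 + 4)), fun M => ?_⟩
  have hne : ∀ s : ESubsets M 2, s.1.Nonempty := by
    intro s
    apply Finset.card_pos.mp
    rw [s.2.2]; norm_num
  refine ⟨fun s => (Fintype.equivFin _)
    (fun i : Fin (m + 1) =>
      (⟨comp i (s.1.min' (hne s)) (s.1.max' (hne s)),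
        comp_lt (Nat.lt_succ_iff.mp i.2) _ _⟩ : Fin (2 * phF m 2 + 4))), ?_⟩
  intro X hsub hlargeEx hhom hcard x hx y hy hxy
  obtain ⟨hXne, hlarge⟩ := hlargeEx
  refine main_growth m X hcard (fun _ => hlarge) ?_ x hx y hy hxy
  intro n hn u hu v hv u' hu' v' hv' huv huv'
  have mkpair : ∀ p q : ℕ, p ∈ X → q ∈ X → p < q →
      ∃ s : ESubsets M 2, s.1 = {p, q} := by
    intro p q hp hq hpq
    refine ⟨⟨{p, q}, ?_, ?_⟩, rfl⟩
    · intro z hz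
      simp only [Finset.mem_insert, Finset.mem_singleton] at hz
      rcases hz with rfl | rfl
      · exact hsub hp
      · exact hsub hq
    · exact Finset.card_pair (by omega)
  obtain ⟨s, hs⟩ := mkpair u v hu hv huv
  obtain ⟨t, ht⟩ := mkpair u' v' hu' hv' huv'
  have hsX : s.1 ⊆ X := by
    rw [hs]
    intro z hz
    simp only [Finset.mem_insert, Finset.mem_singleton] at hz
    rcases hz with rfl | rfl <;> assumption
  have htX : t.1 ⊆ X := by
    rw [ht]
    intro z hz
    simp only [Finset.mem_insert, Finset.mem_singleton] at hz
    rcases hz with rfl | rfl <;> assumption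
  have heq := hhom s t hsX htX
  have heq2 := (Fintype.equivFin _).injective heq
  have heq3 := congrFun heq2 ⟨n, Nat.lt_succ_of_le hn⟩
  have heq4 : comp n (s.1.min' (hne s)) (s.1.max' (hne s))
      = comp n (t.1.min' (hne t)) (t.1.max' (hne t)) := congrArg Fin.val heq3
  have hsmin : s.1.min' (hne s) = u := by
    have := min'_pair huv (hs ▸ hne s)
    simp_rw [hs]
    exact this
  have hsmax : s.1.max' (hne s) = v := by
    have := max'_pair huv (hs ▸ hne s)
    simp_rw [hs]
    exact this
  have htmin : t.1.min' (hne t) = u' := by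
    have := min'_pair huv' (ht ▸ hne t)
    simp_rw [ht]
    exact this
  have htmax : t.1.max' (hne t) = v' := by
    have := max'_pair huv' (ht ▸ hne t)
    simp_rw [ht]
    exact this
  rw [hsmin, hsmax, htmin, htmax] at heq4
  exact heq4
end

section
/- For all natural numbers e, r, k there exists a natural number M such that for every family (P_ε)_{ε < 2^M} of partitions P_ε : [M]^e → r there is a set X ⊆ {0,…,M−1} with card(X) ≥ k such that: (i) if a, b ∈ X and a < b then a² < b; and (ii) if a ∈ X and ε < 2^a, then X ∖ {0,…,a} is homogeneous for P_ε. -/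
def HomogOn (e : ℕ) {r : ℕ} (C : Finset ℕ → Fin r) (Z : Set ℕ) : Prop :=
  ∀ s t : Finset ℕ, ↑s ⊆ Z → ↑t ⊆ Z → s.card = e → t.card = e → C s = C t

lemma HomogOn.mono {e r : ℕ} {C : Finset ℕ → Fin r} {Z Z' : Set ℕ} (h : HomogOn e C Z)
    (hsub : Z' ⊆ Z) : HomogOn e C Z' :=
  fun s t hs ht hcs hct => h s t (subset_trans hs hsub) (subset_trans ht hsub) hcs hct

lemma infRamsey : ∀ (e : ℕ) {r : ℕ} (C : Finset ℕ → Fin r) (Y : Set ℕ), Y.Infinite →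
    ∃ Z : Set ℕ, Z ⊆ Y ∧ Z.Infinite ∧ HomogOn e C Z := by
  intro e
  induction e with
  | zero =>
    intro r C Y hY
    exact ⟨Y, subset_rfl, hY, fun s t _ _ hs ht => by
      rw [Finset.card_eq_zero] at hs ht; rw [hs, ht]⟩
  | succ e IH =>
    intro r C Y hY
    have key : ∀ W : {S : Set ℕ // S.Infinite}, ∃ Z : {S : Set ℕ // S.Infinite},
        Z.1 ⊆ W.1 ∧ (∀ y ∈ Z.1, sInf W.1 < y) ∧ ∃ c, ∀ s : Finset ℕ, ↑s ⊆ Z.1 →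
          s.card = e → C (insert (sInf W.1) s) = c := by
      rintro ⟨W, hW⟩
      have h1 : (W \ Set.Iic (sInf W)).Infinite := hW.diff (Set.finite_Iic _)
      obtain ⟨Z, hZW, hZinf, hhom⟩ := IH (fun s => C (insert (sInf W) s)) _ h1
      obtain ⟨s₀, hs₀Z, hs₀c⟩ := hZinf.exists_subset_card_eq e
      refine ⟨⟨Z, hZinf⟩, fun y hy => (hZW hy).1, fun y hy => ?_,
        C (insert (sInf W) s₀), fun s hs hc => hhom s s₀ hs hs₀Z hc hs₀c⟩
      have := (hZW hy).2
      simpa [Set.mem_Iic, not_le] using this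
    choose F h1 h2 col h3 using key
    let Pc : ℕ → {S : Set ℕ // S.Infinite} := fun n => F^[n] ⟨Y, hY⟩
    have hPs : ∀ n, Pc (n + 1) = F (Pc n) := fun n => Function.iterate_succ_apply' F n _
    set x : ℕ → ℕ := fun n => sInf (Pc n).1 with hx
    have hxmem : ∀ n, x n ∈ (Pc n).1 := fun n => Nat.sInf_mem (Pc n).2.nonempty
    have hsub1 : ∀ n, (Pc (n + 1)).1 ⊆ (Pc n).1 := fun n => by rw [hPs n]; exact h1 _
    have hmono : ∀ n m, n ≤ m → (Pc m).1 ⊆ (Pc n).1 := by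
      intro n m h
      induction h with
      | refl => exact subset_rfl
      | step h ih => exact fun y hy => ih (hsub1 _ hy)
    have hgt : ∀ n, ∀ y ∈ (Pc (n + 1)).1, x n < y := fun n y hy => h2 _ y (by rw [← hPs n]; exact hy)
    have hxlt : ∀ n m, n < m → x n < x m := fun n m h => hgt n (x m) (hmono (n + 1) m h (hxmem m))
    obtain ⟨v, hv⟩ := Finite.exists_infinite_fiber (fun n => col (Pc n))
    have hvinf : {n : ℕ | col (Pc n) = v}.Infinite := by
      rw [show {n : ℕ | col (Pc n) = v} = (fun n => col (Pc n)) ⁻¹' {v} from rfl]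
      exact Set.infinite_coe_iff.mp hv
    have hinj : Set.InjOn x {n : ℕ | col (Pc n) = v} := by
      intro a _ b _ hab
      by_contra hne
      rcases Nat.lt_or_ge a b with h | h
      · exact absurd hab (Nat.ne_of_lt (hxlt _ _ h))
      · have : b < a := lt_of_le_of_ne h (Ne.symm hne)
        exact absurd hab.symm (Nat.ne_of_lt (hxlt _ _ this))
    refine ⟨x '' {n : ℕ | col (Pc n) = v}, ?_, hvinf.image hinj, ?_⟩
    · rintro y ⟨n, _, rfl⟩
      exact hmono 0 n (Nat.zero_le n) (hxmem n)
    · have hmain : ∀ s : Finset ℕ, ↑s ⊆ x '' {n : ℕ | col (Pc n) = v} → s.card = e + 1 →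
          C s = v := by
        intro s hs hcard
        have hne : s.Nonempty := Finset.card_pos.mp (by omega)
        obtain ⟨n, hn, hxn⟩ := hs (s.min'_mem hne)
        have herase : ↑(s.erase (s.min' hne)) ⊆ (Pc (n + 1)).1 := by
          intro y hy
          have hy' := Finset.mem_of_mem_erase (Finset.mem_coe.mp hy)
          have hyne : y ≠ s.min' hne := Finset.ne_of_mem_erase (Finset.mem_coe.mp hy)
          obtain ⟨p, _, hxp⟩ := hs hy'
          have hle : s.min' hne ≤ y := Finset.min'_le s y hy'
          have hlt : x n < x p := by
            rw [hxn, hxp]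
            exact lt_of_le_of_ne hle (Ne.symm hyne)
          have hnp : n < p := by
            rcases Nat.lt_trichotomy n p with h | h | h
            · exact h
            · exact absurd hlt (by rw [h]; exact lt_irrefl _)
            · exact absurd hlt (not_lt.mpr (le_of_lt (hxlt _ _ h)))
          exact hxp ▸ hmono (n + 1) p hnp (hxmem p)
        have hC : C (insert (x n) (s.erase (s.min' hne))) = col (Pc n) := by
          have := h3 (Pc n) (s.erase (s.min' hne)) (by rw [← hPs n]; exact herase)
            (by rw [Finset.card_erase_of_mem (s.min'_mem hne), hcard]; rfl)
          exact this
        rw [hxn, Finset.insert_erase (s.min'_mem hne)] at hC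
        rw [hC, hn]
      exact fun s t hs ht hcs hct => (hmain s hs hcs).trans (hmain t ht hct).symm

lemma multiHomog (e : ℕ) {r : ℕ} (Q : ℕ → Finset ℕ → Fin r) :
    ∀ (m : ℕ) (Y : Set ℕ), Y.Infinite →
      ∃ Z : Set ℕ, Z ⊆ Y ∧ Z.Infinite ∧ ∀ i < m, HomogOn e (Q i) Z := by
  intro m
  induction m with
  | zero => exact fun Y hY => ⟨Y, subset_rfl, hY, fun i hi => absurd hi (Nat.not_lt_zero i)⟩
  | succ m IH =>
    intro Y hY
    obtain ⟨Z, hZY, hZinf, hZhom⟩ := IH Y hY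
    obtain ⟨Z', hZ'Z, hZ'inf, hZ'hom⟩ := infRamsey e (Q m) Z hZinf
    refine ⟨Z', subset_trans hZ'Z hZY, hZ'inf, fun i hi => ?_⟩
    rcases Nat.lt_or_ge i m with h | h
    · exact (hZhom i h).mono hZ'Z
    · have : i = m := by omega
      rw [this]; exact hZ'hom

lemma buildX (e : ℕ) {r : ℕ} (Q : ℕ → Finset ℕ → Fin r) :
    ∀ (k : ℕ) (Y : Set ℕ), Y.Infinite →
      ∃ X : Finset ℕ, ↑X ⊆ Y ∧ X.card = k ∧
        (∀ a ∈ X, ∀ b ∈ X, a < b → a ^ 2 < b) ∧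
        (∀ a ∈ X, ∀ ε : ℕ, ε < 2 ^ a → ∀ s t : Finset ℕ,
          s ⊆ X.filter (fun x => a < x) → t ⊆ X.filter (fun x => a < x) →
          s.card = e → t.card = e → Q ε s = Q ε t) := by
  intro k
  induction k with
  | zero =>
    intro Y hY
    refine ⟨∅, by simp, rfl, by simp, by simp⟩
  | succ k IH =>
    intro Y hY
    set a := sInf Y with ha
    have haY : a ∈ Y := Nat.sInf_mem hY.nonempty
    have hY' : (Y \ Set.Iic (a ^ 2)).Infinite := hY.diff (Set.finite_Iic _)
    obtain ⟨Z, hZY, hZinf, hZhom⟩ := multiHomog e Q (2 ^ a) _ hY'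
    obtain ⟨X', hX'Z, hX'card, hX'sparse, hX'hom⟩ := IH Z hZinf
    have hgt : ∀ y ∈ X', a ^ 2 < y := by
      intro y hy
      have := (hZY (hX'Z hy)).2
      simpa [Set.mem_Iic, not_le] using this
    have hagt : ∀ y ∈ X', a < y := fun y hy =>
      lt_of_le_of_lt (Nat.le_self_pow two_ne_zero a) (hgt y hy)
    have hanot : a ∉ X' := fun h => absurd (hagt a h) (lt_irrefl a)
    refine ⟨insert a X', ?_, ?_, ?_, ?_⟩
    · intro y hy
      rcases Finset.mem_insert.mp (Finset.mem_coe.mp hy) with h | h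
      · rw [h]; exact haY
      · exact (hZY (hX'Z h)).1
    · rw [Finset.card_insert_of_notMem hanot, hX'card]
    · intro u hu b hb hub
      rcases Finset.mem_insert.mp hu with h | h
      · rcases Finset.mem_insert.mp hb with h' | h'
        · omega
        · rw [h]; exact hgt b h'
      · rcases Finset.mem_insert.mp hb with h' | h'
        · exact absurd hub (by rw [h']; exact not_lt.mpr (le_of_lt (hagt u h)))
        · exact hX'sparse u h b h' hub
    · intro u hu ε hε s t hs ht hcs hct
      rcases Finset.mem_insert.mp hu with h | h
      · -- u = a : tail is X', use Z's homogeneity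
        subst h
        have hfil : (insert a X').filter (fun x => a < x) = X' := by
          rw [Finset.filter_insert, if_neg (lt_irrefl a)]
          exact Finset.filter_eq_self.mpr (fun x hx => hagt x hx)
        rw [hfil] at hs ht
        have hsZ : ↑s ⊆ Z := subset_trans (Finset.coe_subset.mpr hs) hX'Z
        have htZ : ↑t ⊆ Z := subset_trans (Finset.coe_subset.mpr ht) hX'Z
        exact hZhom ε hε s t hsZ htZ hcs hct
      · -- u ∈ X'
        have hfil : (insert a X').filter (fun x => u < x) = X'.filter (fun x => u < x) := by
          rw [Finset.filter_insert, if_neg (not_lt.mpr (le_of_lt (hagt u h)))]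
        rw [hfil] at hs ht
        exact hX'hom u h ε hε s t hs ht hcs hct


/-- **Simultaneous homogeneity for exponentially many partitions.** For all
`e, r, k` there is `M` such that for every family `(P_ε)_{ε < 2^M}` of
partitions `P_ε : [M]^e → r` there is `X ⊆ {0, …, M-1}` with `card X ≥ k`
such that: (i) `a² < b` whenever `a, b ∈ X` with `a < b`; and (ii) for `a ∈ X`
and `ε < 2^a`, the set `X ∖ {0, …, a}` is homogeneous for `P_ε`. -/
theorem simultaneous_homogeneity (e r k : ℕ) :
    ∃ M : ℕ, ∀ P : Fin (2 ^ M) → ESubsets M e → Fin r,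
      ∃ X : Finset ℕ, X ⊆ Finset.range M ∧ k ≤ X.card ∧
        (∀ a ∈ X, ∀ b ∈ X, a < b → a ^ 2 < b) ∧
        ∀ a ∈ X, ∀ ε : Fin (2 ^ M), (ε : ℕ) < 2 ^ a →
          Homog (P ε) (X.filter fun x => a < x) := by
  rcases Nat.eq_zero_or_pos r with rfl | hr
  · refine ⟨e + 1, fun P => ?_⟩
    exact ((P ⟨0, by positivity⟩
      ⟨Finset.range e, Finset.range_subset_range.mpr (Nat.le_succ e), Finset.card_range e⟩)).elim0
  · by_contra hcon
    have hP : ∀ M : ℕ, ∃ P : Fin (2 ^ M) → ESubsets M e → Fin r, ∀ X : Finset ℕ,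
        ¬(X ⊆ Finset.range M ∧ k ≤ X.card ∧
          (∀ a ∈ X, ∀ b ∈ X, a < b → a ^ 2 < b) ∧
          ∀ a ∈ X, ∀ ε : Fin (2 ^ M), (ε : ℕ) < 2 ^ a →
            Homog (P ε) (X.filter fun x => a < x)) := by
      intro M
      obtain ⟨P, hPn⟩ := not_forall.mp (fun h => hcon ⟨M, h⟩)
      exact ⟨P, not_exists.mp hPn⟩
    choose P hPbad using hP
    let U : Ultrafilter ℕ := Ultrafilter.of Filter.cofinite
    have hUc : ∀ {s : Set ℕ}, s ∈ Filter.cofinite → s ∈ U := fun h => Ultrafilter.of_le _ h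
    set g : ℕ → Finset ℕ → ℕ → Fin r := fun ε s M =>
      if h : ε < 2 ^ M ∧ s ⊆ Finset.range M ∧ s.card = e then P M ⟨ε, h.1⟩ ⟨s, h.2.1, h.2.2⟩
      else ⟨0, hr⟩ with hgdef
    have hlim : ∀ (ε : ℕ) (s : Finset ℕ), ∃ v : Fin r, {M : ℕ | g ε s M = v} ∈ U := by
      intro ε s
      by_contra h
      push_neg at h
      have hint : (⋂ v ∈ (Finset.univ : Finset (Fin r)), {M : ℕ | g ε s M = v}ᶜ) ∈ U :=
        (Filter.biInter_finset_mem _).mpr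
          (fun v _ => Ultrafilter.compl_mem_iff_notMem.mpr (h v))
      obtain ⟨M, hM⟩ := Ultrafilter.nonempty_of_mem hint
      have := Set.mem_iInter₂.mp hM (g ε s M) (Finset.mem_univ _)
      exact this rfl
    choose Q hQ using hlim
    obtain ⟨X, _, hXcard, hXsparse, hXhom⟩ := buildX e Q k Set.univ Set.infinite_univ
    set B := X.sup id with hBdef
    have hB : ∀ a ∈ X, a ≤ B := fun a ha => Finset.le_sup (f := id) ha
    have hS1 : {M : ℕ | B < M} ∈ U := by
      apply hUc
      rw [Filter.mem_cofinite]
      exact Set.Finite.subset (Set.finite_Iic B) (fun y hy => by simpa using hy)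
    have hS2 : (⋂ p ∈ (Finset.range (2 ^ (B + 1)) ×ˢ X.powerset),
        {M : ℕ | g p.1 p.2 M = Q p.1 p.2}) ∈ U :=
      (Filter.biInter_finset_mem _).mpr (fun p _ => hQ p.1 p.2)
    obtain ⟨M, hM1, hM2⟩ := Ultrafilter.nonempty_of_mem (Filter.inter_mem hS1 hS2)
    have hM1' : B < M := hM1
    refine hPbad M X ⟨?_, ?_, hXsparse, ?_⟩
    · intro a ha
      exact Finset.mem_range.mpr (lt_of_le_of_lt (hB a ha) hM1')
    · omega
    · intro a ha ε hε s t hs ht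
      have hkey : ∀ u : ESubsets M e, u.1 ⊆ (X.filter fun x => a < x) →
          P M ε u = Q (↑ε) u.1 := by
        intro u hu
        have huX : u.1 ⊆ X := subset_trans hu (Finset.filter_subset _ _)
        have hmem : ((↑ε : ℕ), u.1) ∈ Finset.range (2 ^ (B + 1)) ×ˢ X.powerset := by
          refine Finset.mem_product.mpr ⟨Finset.mem_range.mpr ?_, Finset.mem_powerset.mpr huX⟩
          calc (↑ε : ℕ) < 2 ^ a := hε
            _ ≤ 2 ^ B := Nat.pow_le_pow_right (by norm_num) (hB a ha)
            _ < 2 ^ (B + 1) := Nat.pow_lt_pow_right one_lt_two (lt_add_one B)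
        have hMg : g (↑ε) u.1 M = Q (↑ε) u.1 := Set.mem_iInter₂.mp hM2 _ hmem
        have hgu : g (↑ε) u.1 M = P M ε u := by
          simp only [hgdef]
          have hcond : (↑ε : ℕ) < 2 ^ M ∧ u.1 ⊆ Finset.range M ∧ u.1.card = e :=
            ⟨ε.2, u.2.1, u.2.2⟩
          rw [dif_pos hcond]
          rfl
        rw [← hgu, hMg]
      rw [hkey s hs, hkey t ht]
      exact hXhom a ha (↑ε) hε s.1 t.1 hs ht s.2.2 t.2.2
end
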